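/- For any CPTP map Φ on an N-dimensional system, the order-2 Rényi entropies satisfy S_2^map(Φ) + S_2^rec(Φ) ≤ 2 ln(N(N+1)/2). -/

import Mathlib

open Matrix
open scoped BigOperators Kronecker ComplexOrder

noncomputable section

/-- Singular values of a square complex matrix: square roots of eigenvalues of `X * Xᴴ`. -/
def singularValues {n : Type*} [Fintype n] [DecidableEq n] (X : Matrix n n ℂ) : n → ℝ :=
  fun i => Real.sqrt ((Matrix.posSemidef_self_mul_conjTranspose X).1.eigenvalues i)

/-- Shannon entropy of the normalization of a nonnegative vector. -/
def shannonH {ι : Type*} [Fintype ι] (v : ι → ℝ) : ℝ :=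
  -∑ i, (v i / ∑ j, v j) * Real.log (v i / ∑ j, v j)

/-- Rényi entropy of order `q` of the normalization of a nonnegative vector. -/
def renyiH {ι : Type*} [Fintype ι] (q : ℝ) (v : ι → ℝ) : ℝ :=
  (1 / (1 - q)) * Real.log (∑ i, (v i / ∑ j, v j) ^ q)

/-- Unnormalized (von Neumann–type) entropy of the singular value vector. -/
def vnEntropy {n : Type*} [Fintype n] [DecidableEq n] (M : Matrix n n ℂ) : ℝ :=
  -∑ i, singularValues M i * Real.log (singularValues M i)

/-- A quantum channel: completely positive (Kraus form) and trace preserving. -/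
def IsCPTP {N : ℕ} (Φ : Matrix (Fin N) (Fin N) ℂ →ₗ[ℂ] Matrix (Fin N) (Fin N) ℂ) : Prop :=
  ∃ (k : ℕ) (A : Fin k → Matrix (Fin N) (Fin N) ℂ),
    (∀ ρ, Φ ρ = ∑ i, A i * ρ * (A i)ᴴ) ∧ (∑ i, (A i)ᴴ * A i = 1)

/-- Density matrix predicate. -/
def IsDensityMatrix {n : Type*} [Fintype n] [DecidableEq n] (ρ : Matrix n n ℂ) : Prop :=
  ρ.PosSemidef ∧ ρ.trace = 1

/-- The Choi (dynamical) matrix of a linear map on matrices. -/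
def choiMatrix {N : ℕ} (Φ : Matrix (Fin N) (Fin N) ℂ →ₗ[ℂ] Matrix (Fin N) (Fin N) ℂ) :
    Matrix (Fin N × Fin N) (Fin N × Fin N) ℂ :=
  fun p q => Φ (Matrix.single p.2 q.2 1) p.1 q.1

/-- The superoperator matrix of a linear map on matrices. -/
def superMatrix {N : ℕ} (Φ : Matrix (Fin N) (Fin N) ℂ →ₗ[ℂ] Matrix (Fin N) (Fin N) ℂ) :
    Matrix (Fin N × Fin N) (Fin N × Fin N) ℂ :=
  fun p q => Φ (Matrix.single q.1 q.2 1) p.1 p.2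

/-- Hilbert–Schmidt norm of a matrix. -/
def hsNorm {n : Type*} [Fintype n] [DecidableEq n] (M : Matrix n n ℂ) : ℝ :=
  Real.sqrt ((M * Mᴴ).trace.re)

/-- Largest singular value of the superoperator of `Φ`, as the operator norm w.r.t. HS norm. -/
def sigma1 {N : ℕ} (Φ : Matrix (Fin N) (Fin N) ℂ →ₗ[ℂ] Matrix (Fin N) (Fin N) ℂ) : ℝ :=
  sSup {r : ℝ | ∃ M : Matrix (Fin N) (Fin N) ℂ, hsNorm M = 1 ∧ r = hsNorm (Φ M)}

/-- Sum of the (at most) `m` largest entries of a nonnegative vector. -/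
def partialMax {ι : Type*} [Fintype ι] (v : ι → ℝ) (m : ℕ) : ℝ :=
  sSup {t : ℝ | ∃ s : Finset ι, s.card ≤ m ∧ t = ∑ i ∈ s, v i}

/-- `Majorizes w v` means `v ≺ w` (for nonnegative vectors, possibly of different lengths). -/
def Majorizes {ι κ : Type*} [Fintype ι] [Fintype κ] (w : ι → ℝ) (v : κ → ℝ) : Prop :=
  (∑ i, v i = ∑ i, w i) ∧ ∀ m : ℕ, partialMax v m ≤ partialMax w m

/-!
Write `a` and `b` for the singular values of the Choi matrix `D` and of the superoperator `S`.
Complete positivity makes `D` positive semidefinite, and trace preservation gives it trace `N`,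
so `∑ a = N`. The two matrices are reshufflings of each other, so `∑ a² = ∑ b² =: T`.
Trace preservation also says `Sᴴ vec 𝟙 = vec 𝟙`, so some `b` is at least `1`.
The sum of the two collision entropies is `ln (N²/T) + ln ((∑ b)²/T) = 2 ln (N ∑ b / T)`, and
Cauchy–Schwarz on the other `N² - 1` singular values, together with one singular value `≥ 1`,
gives `∑ b ≤ (N + 1)/2 · T`.
-/

lemma renyiH_two_eq_log {ι : Type*} [Fintype ι] (v : ι → ℝ) :
    renyiH 2 v = Real.log ((∑ i, v i) ^ 2 / ∑ i, v i ^ 2) := by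
  simp_rw [renyiH, Real.rpow_two, div_pow, ← Finset.sum_div]
  rw [← inv_div _ ((∑ j, v j) ^ 2), Real.log_inv]
  norm_num

lemma sum_le_mul_sum_sq_of_one_le {ι : Type*} [Fintype ι] {N : ℕ}
    (hcard : Fintype.card ι ≤ N ^ 2) {x : ι → ℝ} {i₀ : ι} (hi₀ : 1 ≤ x i₀) :
    ∑ i, x i ≤ (N + 1) / 2 * ∑ i, x i ^ 2 := by
  classical
  set s := ∑ i ∈ Finset.univ.erase i₀, x i
  set Q := ∑ i ∈ Finset.univ.erase i₀, x i ^ 2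
  have hQ : 0 ≤ Q := Finset.sum_nonneg fun i _ => sq_nonneg (x i)
  have hcard_pos : 0 < Fintype.card ι := Fintype.card_pos_iff.mpr ⟨i₀⟩
  have hN : (1 : ℝ) ≤ N := by
    exact_mod_cast Nat.one_le_iff_ne_zero.mpr (by rintro rfl; omega)
  have hcs : s ^ 2 ≤ ((N : ℝ) ^ 2 - 1) * Q := by
    have hcard_rest : ((Finset.univ.erase i₀).card : ℝ) ≤ (N : ℝ) ^ 2 - 1 := by
      rw [Finset.card_erase_of_mem (Finset.mem_univ i₀), Finset.card_univ,
        Nat.cast_pred hcard_pos, sub_le_sub_iff_right]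
      exact_mod_cast hcard
    exact (sq_sum_le_card_mul_sum_sq ..).trans (mul_le_mul_of_nonneg_right hcard_rest hQ)
  -- AM-GM: `2 s ≤ 2 √((N + 1) Q · (N - 1)) ≤ (N + 1) Q + (N - 1)`
  have hrest : 2 * s ≤ (N + 1) * Q + (N - 1) := by
    refine abs_le_of_sq_le_sq' ?_ (by positivity) |>.2
    nlinarith [sq_nonneg ((N + 1) * Q - (N - 1))]
  have htop : 2 * x i₀ ≤ (N + 1) * x i₀ ^ 2 - (N - 1) := by
    have hfactor : (0 : ℝ) ≤ (N + 1) * x i₀ + (N - 1) := by positivity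
    nlinarith [mul_nonneg (sub_nonneg.2 hi₀) hfactor]
  rw [← Finset.add_sum_erase _ _ (Finset.mem_univ i₀),
    ← Finset.add_sum_erase _ (fun i => x i ^ 2) (Finset.mem_univ i₀)]
  linarith

lemma log_sq_div_add_log_sq_div_le {n B T : ℝ} (hn : 0 < n) (hB : 0 < B)
    (hBT : B ≤ (n + 1) / 2 * T) :
    Real.log (n ^ 2 / T) + Real.log (B ^ 2 / T) ≤ 2 * Real.log (n * (n + 1) / 2) := by
  have hT : 0 < T := pos_of_mul_pos_right (hB.trans_le hBT) (by positivity)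
  have hle : n * B / T ≤ n * (n + 1) / 2 := by
    rw [div_le_iff₀ hT]
    nlinarith
  calc Real.log (n ^ 2 / T) + Real.log (B ^ 2 / T) = Real.log ((n * B / T) ^ 2) := by
        rw [← Real.log_mul (by positivity) (by positivity)]
        congr 1
        field_simp
    _ = 2 * Real.log (n * B / T) := by simp [Real.log_pow]
    _ ≤ 2 * Real.log (n * (n + 1) / 2) := by gcongr

section SingularValues

variable {n : Type*} [Fintype n] [DecidableEq n]

lemma sum_sq_singularValues (X : Matrix n n ℂ) :
    ∑ i, singularValues X i ^ 2 = (X * Xᴴ).trace.re := by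
  have hP := Matrix.posSemidef_self_mul_conjTranspose X
  simp only [singularValues, Real.sq_sqrt (hP.eigenvalues_nonneg _),
    hP.1.trace_eq_sum_eigenvalues, Complex.re_sum]
  rfl

lemma trace_cfc_eq_sum_eigenvalues {A : Matrix n n ℂ} (hA : A.IsHermitian) (f : ℝ → ℝ) :
    (hA.cfc f).trace = ∑ i, (f (hA.eigenvalues i) : ℂ) := by
  rw [Matrix.IsHermitian.cfc, Unitary.conjStarAlgAut_apply, Matrix.trace_mul_cycle,
    Unitary.coe_star_mul_self, Matrix.one_mul, Matrix.trace_diagonal]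
  rfl

open scoped MatrixOrder in
lemma sum_singularValues_of_posSemidef {X : Matrix n n ℂ} (hX : X.PosSemidef) :
    ∑ i, singularValues X i = X.trace.re := by
  have hP := Matrix.posSemidef_self_mul_conjTranspose X
  have hXX : X * Xᴴ = X * X := by rw [hX.1.eq]
  have hsqrt : hP.1.cfc Real.sqrt = X :=
    calc hP.1.cfc Real.sqrt = cfc Real.sqrt (X * X) := by rw [← hP.1.cfc_eq, hXX]
      _ = CFC.sqrt (X * X) := by
        rw [CFC.sqrt_eq_real_sqrt _ (hXX ▸ hP.nonneg), cfcₙ_eq_cfc]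
      _ = X := CFC.sqrt_mul_self X hX.nonneg
  calc ∑ i, singularValues X i = (hP.1.cfc Real.sqrt).trace.re := by
        rw [trace_cfc_eq_sum_eigenvalues, Complex.re_sum]; rfl
    _ = X.trace.re := by rw [hsqrt]

end SingularValues

lemma Matrix.IsHermitian.exists_le_eigenvalues {n : Type*} [Fintype n] [DecidableEq n]
    {M : Matrix n n ℂ} (hM : M.IsHermitian) {v : n → ℂ} (hv : v ≠ 0) {c : ℝ}
    (h : (c : ℂ) * (star v ⬝ᵥ v) ≤ star v ⬝ᵥ (M *ᵥ v)) :
    ∃ i, c ≤ hM.eigenvalues i := by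
  by_contra! hlt
  have hdiag : (c : ℂ) • 1 - M = (hM.eigenvectorUnitary : Matrix n n ℂ) *
      diagonal (fun i => ((c - hM.eigenvalues i : ℝ) : ℂ)) *
        star (hM.eigenvectorUnitary : Matrix n n ℂ) := by
    have hsub : diagonal (fun i => ((c - hM.eigenvalues i : ℝ) : ℂ))
        = (c : ℂ) • 1 - diagonal (RCLike.ofReal ∘ hM.eigenvalues) := by
      ext i j
      by_cases hij : i = j <;> simp [hij]
    conv_lhs => rw [hM.spectral_theorem]
    rw [Unitary.conjStarAlgAut_apply, hsub, mul_sub, sub_mul, mul_smul_comm, mul_one,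
      smul_mul_assoc, mem_unitaryGroup_iff.mp hM.eigenvectorUnitary.2]
  have hpos : ((c : ℂ) • 1 - M).PosDef := by
    rw [hdiag, Unitary.isUnit_coe.posDef_star_right_conjugate_iff, posDef_diagonal_iff]
    exact fun i => mod_cast sub_pos.2 (hlt i)
  have := hpos.dotProduct_mulVec_pos hv
  rw [sub_mulVec, dotProduct_sub, smul_mulVec, one_mulVec, dotProduct_smul, smul_eq_mul] at this
  exact (sub_pos.1 this).not_ge h

lemma trace_sum_mul_mul_conjTranspose {ι n R : Type*} [Fintype ι] [Fintype n] [DecidableEq n]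
    [CommSemiring R] [StarRing R] {A : ι → Matrix n n R} (htp : ∑ i, (A i)ᴴ * A i = 1)
    (ρ : Matrix n n R) : (∑ i, A i * ρ * (A i)ᴴ).trace = ρ.trace := by
  simp_rw [trace_sum, trace_mul_cycle _ ρ, ← trace_sum, ← Finset.sum_mul, htp, Matrix.one_mul]

lemma trace_mul_conjTranspose_eq_sum {m : Type*} [Fintype m] (M : Matrix m m ℂ) :
    (M * Mᴴ).trace = ∑ p, ∑ q, M p q * star (M p q) := by
  simp [trace, mul_apply]

lemma trace_choiMatrix_mul_conjTranspose {N : ℕ}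
    (Φ : Matrix (Fin N) (Fin N) ℂ →ₗ[ℂ] Matrix (Fin N) (Fin N) ℂ) :
    (choiMatrix Φ * (choiMatrix Φ)ᴴ).trace = (superMatrix Φ * (superMatrix Φ)ᴴ).trace := by
  rw [trace_mul_conjTranspose_eq_sum, trace_mul_conjTranspose_eq_sum, ← Fintype.sum_prod_type',
    ← Fintype.sum_prod_type']
  exact Fintype.sum_equiv (Equiv.prodProdProdComm _ _ _ _) _ _ fun _ => rfl

section Channel

variable {N : ℕ} {Φ : Matrix (Fin N) (Fin N) ℂ →ₗ[ℂ] Matrix (Fin N) (Fin N) ℂ}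

lemma posSemidef_choiMatrix {k : ℕ} {A : Fin k → Matrix (Fin N) (Fin N) ℂ}
    (hmap : ∀ ρ, Φ ρ = ∑ i, A i * ρ * (A i)ᴴ) : (choiMatrix Φ).PosSemidef := by
  let B : Matrix (Fin k) (Fin N × Fin N) ℂ := of fun i p => star (A i p.1 p.2)
  have hB : choiMatrix Φ = Bᴴ * B := by
    ext p q
    simp [B, choiMatrix, hmap, mul_apply, single, Matrix.sum_apply, ite_and, Finset.sum_ite_eq]
  exact hB ▸ posSemidef_conjTranspose_mul_self B

lemma trace_choiMatrix (htr : ∀ ρ, (Φ ρ).trace = ρ.trace) : (choiMatrix Φ).trace = N := by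
  calc (choiMatrix Φ).trace = ∑ b, (Φ (single b b (1 : ℂ))).trace := by
        rw [trace, Fintype.sum_prod_type, Finset.sum_comm]; rfl
    _ = N := by simp [htr]

lemma superMatrix_conjTranspose_mulVec_one (htr : ∀ ρ, (Φ ρ).trace = ρ.trace) :
    (superMatrix Φ)ᴴ *ᵥ (fun p => (1 : Matrix (Fin N) (Fin N) ℂ) p.1 p.2)
      = fun p => (1 : Matrix (Fin N) (Fin N) ℂ) p.1 p.2 := by
  ext q
  calc ((superMatrix Φ)ᴴ *ᵥ fun p => (1 : Matrix (Fin N) (Fin N) ℂ) p.1 p.2) q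
      = star (Φ (single q.1 q.2 1)).trace := by
        simp [mulVec, dotProduct, Fintype.sum_prod_type, one_apply, superMatrix, trace, star_sum]
    _ = (1 : Matrix (Fin N) (Fin N) ℂ) q.1 q.2 := by
        rw [htr]
        by_cases h : q.1 = q.2
        · rw [h, trace_single_eq_same, one_apply_eq, star_one]
        · simp [h, trace_single_eq_of_ne]

lemma exists_one_le_singularValues_superMatrix (hN : 0 < N)
    (htr : ∀ ρ, (Φ ρ).trace = ρ.trace) : ∃ i, 1 ≤ singularValues (superMatrix Φ) i := by
  set S := superMatrix Φ
  set v : Fin N × Fin N → ℂ := fun p => (1 : Matrix (Fin N) (Fin N) ℂ) p.1 p.2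
  have hSv : Sᴴ *ᵥ v = v := superMatrix_conjTranspose_mulVec_one htr
  have hv : v ≠ 0 := fun h => by simpa [v] using congrFun h (⟨0, hN⟩, ⟨0, hN⟩)
  have hray : ((1 : ℝ) : ℂ) * (star v ⬝ᵥ v) ≤ star v ⬝ᵥ ((S * Sᴴ) *ᵥ v) := by
    have hstar : star v ᵥ* S = star (Sᴴ *ᵥ v) := by
      rw [star_mulVec, conjTranspose_conjTranspose]
    rw [← mulVec_mulVec, hSv, dotProduct_mulVec, hstar, hSv, Complex.ofReal_one, one_mul]
  obtain ⟨i, hi⟩ := (posSemidef_self_mul_conjTranspose S).1.exists_le_eigenvalues hv hray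
  exact ⟨i, Real.one_le_sqrt.mpr hi⟩

end Channel

theorem collision_entropy_sum_upper_bound {N : ℕ} (hN : 0 < N)
    (Φ : Matrix (Fin N) (Fin N) ℂ →ₗ[ℂ] Matrix (Fin N) (Fin N) ℂ) (hΦ : IsCPTP Φ) :
    renyiH 2 (singularValues (choiMatrix Φ)) + renyiH 2 (singularValues (superMatrix Φ))
      ≤ 2 * Real.log ((N : ℝ) * (N + 1) / 2) := by
  obtain ⟨k, A, hmap, htp⟩ := hΦ
  have htr : ∀ ρ, (Φ ρ).trace = ρ.trace := fun ρ => by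
    rw [hmap]; exact trace_sum_mul_mul_conjTranspose htp ρ
  set a := singularValues (choiMatrix Φ)
  set b := singularValues (superMatrix Φ)
  have ha : ∑ i, a i = N := by
    rw [sum_singularValues_of_posSemidef (posSemidef_choiMatrix hmap), trace_choiMatrix htr]
    simp
  have hab : ∑ i, a i ^ 2 = ∑ i, b i ^ 2 := by
    rw [sum_sq_singularValues, sum_sq_singularValues, trace_choiMatrix_mul_conjTranspose]
  obtain ⟨i₀, hi₀⟩ := exists_one_le_singularValues_superMatrix hN htr
  have hbpos : 0 < ∑ i, b i := one_pos.trans_le <| hi₀.trans <|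
    Finset.single_le_sum (fun i _ => Real.sqrt_nonneg _) (Finset.mem_univ i₀)
  rw [renyiH_two_eq_log, renyiH_two_eq_log, ha, hab]
  exact log_sq_div_add_log_sq_div_le (by exact_mod_cast hN) hbpos
    (sum_le_mul_sum_sq_of_one_le (by simp [sq]) hi₀)

end
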